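/- arXiv:2106.08058 — 2 statements merged into one kernel-verified Lean document; each statement's English description precedes it below -/
import Mathlib

section
/- Let M = {1^{k_1}, 2^{k_2}, ..., n^{k_n}} be a multiset with each k_i ≥ 1 and K = k_1 + k_2 + ... + k_n. For every tree T ∈ 𝒯_M, one has eleaf(T) + dcdes(T) + dcasc(T) + cpeak(T) + cval(T) = K + 1. -/
/-! Common definitions: words (permutations of multisets), their statistics,
ordered labeled trees and their cyclic statistics. -/

attribute [local instance] Classical.propDecidable

/-- `asc`: number of indices `0 ≤ i ≤ m` with `π_i < π_{i+1}`, convention `π_0 = π_{m+1} = 0`. -/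
def ascW (w : List ℕ) : ℕ :=
  (((0 :: (w ++ [0])).zip (w ++ [0])).countP fun p => decide (p.1 < p.2))

def desW (w : List ℕ) : ℕ :=
  (((0 :: (w ++ [0])).zip (w ++ [0])).countP fun p => decide (p.2 < p.1))

def platW (w : List ℕ) : ℕ :=
  (((0 :: (w ++ [0])).zip (w ++ [0])).countP fun p => decide (p.1 = p.2))

/-- quasi-Stirling: no indices `i < j < k < l` with `π_i = π_k` and `π_j = π_l`. -/
def IsQuasiStirling (w : List ℕ) : Prop :=
  ¬ ∃ l, l < w.length ∧ ∃ k, k < l ∧ ∃ j, j < k ∧ ∃ i, i < j ∧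
      w.getD i 0 = w.getD k 0 ∧ w.getD j 0 = w.getD l 0

/-- Stirling: no indices `i < j < k` with `π_i = π_k` and `π_j < π_i`. -/
def IsStirling (w : List ℕ) : Prop :=
  ¬ ∃ k, k < w.length ∧ ∃ j, j < k ∧ ∃ i, i < j ∧
      w.getD i 0 = w.getD k 0 ∧ w.getD j 0 < w.getD i 0

/-- The multiset `{1^{k 1}, 2^{k 2}, …, n^{k n}}`. -/
def msetM (n : ℕ) (k : ℕ → ℕ) : Multiset ℕ :=
  ∑ i ∈ Finset.Icc 1 n, Multiset.replicate (k i) i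

/-- The finite set of all words whose multiset of letters is `M`. -/
noncomputable def permsOf (M : Multiset ℕ) : Finset (List ℕ) :=
  M.toList.permutations.toFinset

/-- The finite set of quasi-Stirling permutations of `M`. -/
noncomputable def qsPerms (M : Multiset ℕ) : Finset (List ℕ) :=
  (permsOf M).filter IsQuasiStirling

/-- The finite set of Stirling permutations of `M`. -/
noncomputable def sPerms (M : Multiset ℕ) : Finset (List ℕ) :=
  (permsOf M).filter IsStirling

open MvPolynomial in
/-- `Q̄_M(x,y,z)`, with `x = X 0`, `y = X 1`, `z = X 2`. -/
noncomputable def QbarPoly (M : Multiset ℕ) : MvPolynomial (Fin 3) ℤ :=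
  ∑ w ∈ qsPerms M, X 0 ^ ascW w * X 1 ^ desW w * X 2 ^ platW w

open MvPolynomial in
/-- `Q_M(x,y,z)`, with `x = X 0`, `y = X 1`, `z = X 2`. -/
noncomputable def QPoly (M : Multiset ℕ) : MvPolynomial (Fin 3) ℤ :=
  ∑ w ∈ sPerms M, X 0 ^ ascW w * X 1 ^ desW w * X 2 ^ platW w

/-! Cyclic statistics of a word `w_0 w_1 … w_ℓ` read cyclically. -/

/-- Number of cyclic descents of a word: indices `i` with `w_i > w_{i+1}`, indices mod `ℓ+1`. -/
def cdesW (w : List ℕ) : ℕ := ((w.zip (w.rotate 1)).countP fun p => decide (p.2 < p.1))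

/-- Number of cyclic ascents. -/
def cascW (w : List ℕ) : ℕ := ((w.zip (w.rotate 1)).countP fun p => decide (p.1 < p.2))

/-- The list of cyclic triples `(w_{i-1}, w_i, w_{i+1})`, indices mod `ℓ+1`. -/
def cycTriples (w : List ℕ) : List (ℕ × ℕ × ℕ) :=
  (w.rotate (w.length - 1)).zip (w.zip (w.rotate 1))

/-- Number of double cyclic descents of a word: indices with `w_{i-1} > w_i > w_{i+1}`. -/
def dcdesW (w : List ℕ) : ℕ :=
  ((cycTriples w).countP fun p => decide (p.2.1 < p.1 ∧ p.2.2 < p.2.1))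

/-- Number of double cyclic ascents of a word: indices with `w_{i-1} < w_i < w_{i+1}`. -/
def dcascW (w : List ℕ) : ℕ :=
  ((cycTriples w).countP fun p => decide (p.1 < p.2.1 ∧ p.2.1 < p.2.2))

/-- Number of cyclic peaks of a word: indices with `w_{i-1} < w_i > w_{i+1}`. -/
def cpeakW (w : List ℕ) : ℕ :=
  ((cycTriples w).countP fun p => decide (p.1 < p.2.1 ∧ p.2.2 < p.2.1))

/-- Number of cyclic valleys of a word: indices with `w_{i-1} > w_i < w_{i+1}`. -/
def cvalW (w : List ℕ) : ℕ :=
  ((cycTriples w).countP fun p => decide (p.2.1 < p.1 ∧ p.2.1 < p.2.2))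

/-- Ordered labeled trees: rooted plane trees with labels in `ℕ`. -/
inductive LTree : Type where
  | node (label : ℕ) (children : List LTree) : LTree

namespace LTree

/-- The label of the root. -/
def label : LTree → ℕ
  | node a _ => a

theorem sizeOf_lt_of_mem {s : LTree} {ts : List LTree} (h : s ∈ ts) {a : ℕ} :
    sizeOf s < sizeOf (LTree.node a ts) := by
  have := List.sizeOf_lt_of_mem h
  simp only [node.sizeOf_spec]
  omega

/-- The multiset of all vertex labels. -/
def labels : LTree → Multiset ℕ
  | node a ts => a ::ₘ (ts.attach.map (fun s => labels s.1)).sum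
decreasing_by exact sizeOf_lt_of_mem s.2

/-- The word `v_0 v_1 … v_ℓ` associated to a vertex: its label followed by the labels of
its children from left to right. -/
def wordOf : LTree → List ℕ
  | node a ts => a :: ts.map label

/-- `cdes(T) = ∑_{u ∈ V(T)} cdes(u)`. -/
def cdes : LTree → ℕ
  | node a ts => cdesW (a :: ts.map label) + (ts.attach.map (fun s => cdes s.1)).sum
decreasing_by exact sizeOf_lt_of_mem s.2

/-- `casc(T) = ∑_{u ∈ V(T)} casc(u)`. -/
def casc : LTree → ℕ
  | node a ts => cascW (a :: ts.map label) + (ts.attach.map (fun s => casc s.1)).sum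
decreasing_by exact sizeOf_lt_of_mem s.2

/-- Auxiliary: number of leaves at even level, `b = true` meaning the current root is at
even level. -/
def eleafAux : LTree → Bool → ℕ
  | node _ ts, b => (cond b (if ts.isEmpty then 1 else 0) 0)
      + (ts.attach.map (fun s => eleafAux s.1 !b)).sum
decreasing_by exact sizeOf_lt_of_mem s.2

/-- `eleaf(T)`: the number of leaves of `T` at even level. -/
def eleaf (T : LTree) : ℕ := eleafAux T true

/-- Auxiliary: given a word-statistic `f`, sum `f (wordOf u)` over all vertices `u` at even
level (`b = true` meaning the current root is at even level).  Since every vertex of a tree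
is classified (as a double cyclic descent/ascent, cyclic peak/valley) by exactly one index
of the word of an even vertex — an even vertex by index `0` of its own word, an odd vertex
by its position in the word of its (even) parent — the corresponding tree statistics are
obtained by summing the word statistics over the even vertices. -/
def evenSum (f : List ℕ → ℕ) : LTree → Bool → ℕ
  | node a ts, b => (cond b (f (a :: ts.map label)) 0)
      + (ts.attach.map (fun s => evenSum f s.1 !b)).sum
decreasing_by exact sizeOf_lt_of_mem s.2

/-- `dcdes(T)`: the number of vertices of `T` that are double cyclic descents. -/
def dcdes (T : LTree) : ℕ := evenSum dcdesW T true

/-- `dcasc(T)`: the number of vertices of `T` that are double cyclic ascents. -/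
def dcasc (T : LTree) : ℕ := evenSum dcascW T true

/-- `cpeak(T)`: the number of vertices of `T` that are cyclic peaks. -/
def cpeak (T : LTree) : ℕ := evenSum cpeakW T true

/-- `cval(T)`: the number of vertices of `T` that are cyclic valleys. -/
def cval (T : LTree) : ℕ := evenSum cvalW T true

/-- Auxiliary: every odd vertex labeled `i` has exactly `k i - 1` children, all labeled `i`
(`b = true` meaning the current root is at even level). -/
def oddOK (k : ℕ → ℕ) : LTree → Bool → Prop
  | node a ts, b => (b = false → (ts.length = k a - 1 ∧ ∀ s ∈ ts, s.label = a)) ∧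
      ∀ s : {x // x ∈ ts}, oddOK k s.1 (!b)
decreasing_by exact sizeOf_lt_of_mem s.2

/-- Weakly increasing: the labels along the path from the root to any leaf are weakly
increasing from top to bottom, i.e. every child's label is at least its parent's label. -/
def incr : LTree → Prop
  | node a ts => (∀ s ∈ ts, a ≤ s.label) ∧ ∀ s : {x // x ∈ ts}, incr s.1
decreasing_by exact sizeOf_lt_of_mem s.2

end LTree

/-- Membership in `𝒯_M` for `M = {1^{k 1}, …, n^{k n}}`: the multiset of vertex labels is
`{0} ∪ M`, the root is labeled `0`, and every odd vertex labeled `i` has exactly `k i - 1`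
children, all labeled `i`. -/
def memTM (n : ℕ) (k : ℕ → ℕ) (T : LTree) : Prop :=
  T.label = 0 ∧ T.labels = 0 ::ₘ msetM n k ∧ T.oddOK k true

/-- Membership in `ℐ𝒯_M`: weakly increasing trees in `𝒯_M`. -/
def memIT (n : ℕ) (k : ℕ → ℕ) (T : LTree) : Prop :=
  memTM n k T ∧ T.incr


/-! ### Auxiliary machinery for the proof -/

namespace LTree

/-- Custom induction principle. -/
theorem ind' {P : LTree → Prop} (h : ∀ a ts, (∀ s ∈ ts, P s) → P (node a ts)) : ∀ T, P T
  | node a ts => h a ts (fun s hs => ind' h s)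
decreasing_by exact sizeOf_lt_of_mem hs

/-- Multiset of labels at odd relative level (`b = true` meaning root is even). -/
def oddMS : LTree → Bool → Multiset ℕ
  | node a ts, b => (cond b 0 {a}) + (ts.attach.map (fun s => oddMS s.1 !b)).sum
decreasing_by exact sizeOf_lt_of_mem s.2

lemma oddMS_node (a : ℕ) (ts : List LTree) (b : Bool) :
    oddMS (node a ts) b = (cond b 0 {a}) + (ts.map (fun s => oddMS s !b)).sum := by
  rw [oddMS]
  exact congrArg _ (congrArg List.sum (List.attach_map_val (l := ts) (f := fun s => oddMS s !b)))

lemma labels_node (a : ℕ) (ts : List LTree) :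
    (node a ts).labels = a ::ₘ (ts.map (fun s => s.labels)).sum := by
  rw [labels]
  exact congrArg _ (congrArg List.sum (List.attach_map_val (l := ts) (f := fun s => labels s)))

lemma eleafAux_node (a : ℕ) (ts : List LTree) (b : Bool) :
    eleafAux (node a ts) b = (cond b (if ts.isEmpty then 1 else 0) 0)
      + (ts.map (fun s => eleafAux s !b)).sum := by
  rw [eleafAux]
  exact congrArg _ (congrArg List.sum (List.attach_map_val (l := ts) (f := fun s => eleafAux s !b)))

lemma evenSum_node (f : List ℕ → ℕ) (a : ℕ) (ts : List LTree) (b : Bool) :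
    evenSum f (node a ts) b = (cond b (f (a :: ts.map label)) 0)
      + (ts.map (fun s => evenSum f s !b)).sum := by
  rw [evenSum]
  exact congrArg _ (congrArg List.sum (List.attach_map_val (l := ts) (f := fun s => evenSum f s !b)))

lemma oddOK_node (k : ℕ → ℕ) (a : ℕ) (ts : List LTree) (b : Bool) :
    oddOK k (node a ts) b ↔ (b = false → (ts.length = k a - 1 ∧ ∀ s ∈ ts, s.label = a)) ∧
      ∀ s ∈ ts, oddOK k s (!b) := by
  rw [oddOK]
  exact and_congr_right fun _ => ⟨fun h s hs => h ⟨s, hs⟩, fun h s => h s.1 s.2⟩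

lemma label_mem_oddMS (s : LTree) : s.label ∈ oddMS s false := by
  cases s with
  | node c cs => rw [oddMS_node]; simp [label]

end LTree

open LTree

lemma mod_ne₁ (i n : ℕ) (hi : i < n) (hn : 2 ≤ n) : (i + 1) % n ≠ i := by
  rcases Nat.lt_or_ge (i + 1) n with h | h
  · rw [Nat.mod_eq_of_lt h]; omega
  · have h' : i + 1 = n := by omega
    rw [h', Nat.mod_self]; omega

lemma mod_ne₂ (i n : ℕ) (hi : i < n) (hn : 2 ≤ n) : (i + (n - 1)) % n ≠ i := by
  rcases Nat.eq_zero_or_pos i with rfl | h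
  · rw [Nat.mod_eq_of_lt (by omega)]; omega
  · have h' : i + (n - 1) = (i - 1) + 1 * n := by omega
    rw [h', Nat.add_mul_mod_self_right, Nat.mod_eq_of_lt (by omega)]; omega

/-- Each triple with pairwise-distinct consecutive entries is of exactly one of the four
cyclic types. -/
lemma count4 (L : List (ℕ × ℕ × ℕ))
    (h : ∀ p ∈ L, p.1 ≠ p.2.1 ∧ p.2.1 ≠ p.2.2) :
    (L.countP fun p => decide (p.2.1 < p.1 ∧ p.2.2 < p.2.1))
    + (L.countP fun p => decide (p.1 < p.2.1 ∧ p.2.1 < p.2.2))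
    + (L.countP fun p => decide (p.1 < p.2.1 ∧ p.2.2 < p.2.1))
    + (L.countP fun p => decide (p.2.1 < p.1 ∧ p.2.1 < p.2.2)) = L.length := by
  induction L with
  | nil => simp
  | cons q l ih =>
    have hq := h q List.mem_cons_self
    have hl := ih fun p hp => h p (List.mem_cons_of_mem _ hp)
    simp only [List.countP_cons, List.length_cons, decide_eq_true_eq]
    obtain ⟨h1, h2⟩ := hq
    split_ifs <;> omega

lemma cycTriples_length (w : List ℕ) : (cycTriples w).length = w.length := by
  simp [cycTriples]

lemma wordSum2 (w : List ℕ) (hw : w.Nodup) (h2 : 2 ≤ w.length) :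
    dcdesW w + dcascW w + cpeakW w + cvalW w = w.length := by
  rw [dcdesW, dcascW, cpeakW, cvalW, count4, cycTriples_length]
  intro p hp
  rw [List.mem_iff_getElem] at hp
  obtain ⟨i, hi, rfl⟩ := hp
  rw [cycTriples_length] at hi
  have hi' : i < (cycTriples w).length := by rwa [cycTriples_length]
  have hgz : (cycTriples w)[i] =
      ((w.rotate (w.length - 1))[i]'(by simpa using hi),
        (w[i], (w.rotate 1)[i]'(by simpa using hi))) := by
    simp [cycTriples, List.getElem_zip]
  rw [hgz, List.getElem_rotate, List.getElem_rotate]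
  refine ⟨fun hEq => ?_, fun hEq => ?_⟩
  · exact mod_ne₂ i w.length hi h2 ((hw.getElem_inj_iff).mp hEq)
  · exact mod_ne₁ i w.length hi h2 ((hw.getElem_inj_iff).mp hEq.symm)

lemma wordSum1 (a : ℕ) :
    dcdesW [a] = 0 ∧ dcascW [a] = 0 ∧ cpeakW [a] = 0 ∧ cvalW [a] = 0 := by
  simp [dcdesW, dcascW, cpeakW, cvalW, cycTriples, List.rotate_singleton]

/-- Combined per-word identity. -/
lemma wordSum (w : List ℕ) (hw : w.Nodup) (hne : w ≠ []) :
    (if w.length = 1 then 1 else 0)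
    + (dcdesW w + dcascW w + cpeakW w + cvalW w) = w.length := by
  rcases w with _ | ⟨a, l⟩
  · exact absurd rfl hne
  rcases l with _ | ⟨b, l⟩
  · obtain ⟨e1, e2, e3, e4⟩ := wordSum1 a
    simp [e1, e2, e3, e4]
  · have h2 : 2 ≤ (a :: b :: l).length := by simp only [List.length_cons]; omega
    rw [wordSum2 _ hw h2]
    simp

/-! ### Multiset helper lemmas -/

lemma multi_le_sum {L : List (Multiset ℕ)} {x : Multiset ℕ} (hx : x ∈ L) : x ≤ L.sum :=
  List.single_le_sum (fun y _ => Multiset.zero_le y) x hx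

lemma coe_map_label_le (ts : List LTree) :
    (↑(ts.map LTree.label) : Multiset ℕ) ≤ (ts.map (fun s => oddMS s false)).sum := by
  induction ts with
  | nil => simp
  | cons s ts ih =>
    simp only [List.map_cons, List.sum_cons, ← Multiset.cons_coe,
      ← Multiset.singleton_add]
    exact add_le_add (Multiset.singleton_le.mpr (label_mem_oddMS s)) ih

lemma card_listSum (L : List (Multiset ℕ)) :
    Multiset.card L.sum = (L.map Multiset.card).sum := by
  induction L with
  | nil => simp
  | cons x l ih => simp [ih]

lemma bind_listSum (L : List (Multiset ℕ)) (g : ℕ → Multiset ℕ) :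
    L.sum.bind g = (L.map (fun m => m.bind g)).sum := by
  induction L with
  | nil => simp
  | cons x l ih => simp [Multiset.add_bind, ih]

lemma sum_const_singleton (m : ℕ) (a : ℕ) :
    (List.replicate m ({a} : Multiset ℕ)).sum = Multiset.replicate m a := by
  induction m with
  | zero => simp
  | succ m ih =>
    rw [List.replicate_succ, List.sum_cons, ih, Multiset.replicate_succ,
      Multiset.singleton_add]

lemma card_finsetSum {β : Type*} (s : Finset β) (f : β → Multiset ℕ) :
    Multiset.card (∑ i ∈ s, f i) = ∑ i ∈ s, Multiset.card (f i) := by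
  classical
  induction s using Finset.cons_induction with
  | empty => simp
  | cons a s ha ih => simp [Finset.sum_cons, ih]

/-! ### The key per-subtree lemma -/

lemma key (k : ℕ → ℕ) (T : LTree) : ∀ b : Bool, T.oddOK k b → (oddMS T b).Nodup →
    (b = true → T.label ∉ oddMS T b) →
    T.eleafAux b + evenSum dcdesW T b + evenSum dcascW T b + evenSum cpeakW T b
      + evenSum cvalW T b + (cond b 0 1) = Multiset.card T.labels := by
  induction T using LTree.ind' with
  | _ a ts IH =>
  intro b hOK hnd hnotin
  rw [oddOK_node] at hOK
  obtain ⟨hleaf, hrec⟩ := hOK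
  rw [oddMS_node] at hnd hnotin
  rw [labels_node, eleafAux_node, evenSum_node, evenSum_node, evenSum_node, evenSum_node]
  have hRcard : Multiset.card (a ::ₘ (ts.map (fun s => s.labels)).sum)
      = (ts.map (fun s => Multiset.card s.labels)).sum + 1 := by
    rw [Multiset.card_cons, card_listSum, List.map_map]
    rfl
  cases b with
  | false =>
    simp only [Bool.cond_false, Bool.not_false] at hnd hrec ⊢
    obtain ⟨-, hndsum, hdisj⟩ := Multiset.nodup_add.mp hnd
    have hanotin : a ∉ (ts.map (fun s => oddMS s true)).sum :=
      Multiset.disjoint_left.mp hdisj (Multiset.mem_singleton_self a)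
    have hIH : ∀ s ∈ ts, eleafAux s true + evenSum dcdesW s true + evenSum dcascW s true
        + evenSum cpeakW s true + evenSum cvalW s true = Multiset.card s.labels := by
      intro s hs
      have hle : oddMS s true ≤ (ts.map (fun s => oddMS s true)).sum :=
        multi_le_sum (List.mem_map_of_mem hs)
      have h1 := IH s hs true (hrec s hs) (Multiset.nodup_of_le hle hndsum)
        (fun _ => by
          rw [(hleaf rfl).2 s hs]
          exact fun h => hanotin (Multiset.mem_of_le hle h))
      simpa using h1
    rw [hRcard]
    simp only [Nat.zero_add]
    rw [← List.sum_map_add, ← List.sum_map_add, ← List.sum_map_add, ← List.sum_map_add,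
      List.map_congr_left hIH]
  | true =>
    simp only [Bool.cond_true, Bool.not_true] at hnd hnotin hrec ⊢
    rw [zero_add] at hnd
    have hna : a ∉ (ts.map (fun s => oddMS s false)).sum := by
      have := hnotin trivial
      rw [zero_add] at this
      exact this
    have hcoe : (↑(ts.map LTree.label) : Multiset ℕ) ≤ (ts.map (fun s => oddMS s false)).sum :=
      coe_map_label_le ts
    have hwnd : (a :: ts.map LTree.label).Nodup := by
      refine List.nodup_cons.mpr ⟨fun h => hna ?_, Multiset.coe_nodup.mp
        (Multiset.nodup_of_le hcoe hnd)⟩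
      exact Multiset.mem_of_le hcoe (by simpa using h)
    have hword := wordSum (a :: ts.map LTree.label) hwnd (by simp)
    have hindic : (if ts.isEmpty then 1 else 0)
        = (if (a :: ts.map LTree.label).length = 1 then 1 else 0) := by
      cases ts <;> simp
    have hIH : ∀ s ∈ ts, Multiset.card s.labels = (eleafAux s false + evenSum dcdesW s false
        + evenSum dcascW s false + evenSum cpeakW s false + evenSum cvalW s false) + 1 := by
      intro s hs
      have hle : oddMS s false ≤ (ts.map (fun s => oddMS s false)).sum :=
        multi_le_sum (List.mem_map_of_mem hs)
      have h1 := IH s hs false (hrec s hs) (Multiset.nodup_of_le hle hnd) (by simp)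
      simpa using h1.symm
    rw [hRcard, List.map_congr_left hIH, List.sum_map_add]
    have hlen : (List.map (fun (_ : LTree) => 1) ts).sum = ts.length := by
      simp [List.map_const']
    rw [hlen]
    simp only [List.sum_map_add]
    have hwlen : (a :: ts.map LTree.label).length = ts.length + 1 := by simp
    omega

/-! ### Relating `labels` to `oddMS` -/

lemma labels_eq (k : ℕ → ℕ) (T : LTree) : ∀ b : Bool, T.oddOK k b →
    T.labels = (cond b {T.label} 0)
      + (oddMS T b).bind (fun i => Multiset.replicate (k i - 1 + 1) i) := by
  induction T using LTree.ind' with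
  | _ a ts IH =>
  intro b hOK
  rw [oddOK_node] at hOK
  obtain ⟨hc, hrec⟩ := hOK
  rw [labels_node, oddMS_node]
  cases b with
  | true =>
    simp only [Bool.cond_true, Bool.not_true]
    rw [zero_add, bind_listSum, List.map_map]
    show a ::ₘ _ = {(LTree.node a ts).label} + _
    rw [show (LTree.node a ts).label = a from rfl, Multiset.singleton_add]
    congr 1
    refine congrArg List.sum (List.map_congr_left fun s hs => ?_)
    have h1 := IH s hs false (hrec s hs)
    simpa using h1
  | false =>
    obtain ⟨hlen, hlab⟩ := hc rfl
    simp only [Bool.cond_false, Bool.not_false]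
    rw [zero_add, Multiset.add_bind, bind_listSum, List.map_map, Multiset.singleton_bind]
    have hpt : ∀ s ∈ ts, s.labels
        = {a} + (oddMS s true).bind (fun i => Multiset.replicate (k i - 1 + 1) i) := by
      intro s hs
      have h1 := IH s hs true (hrec s hs)
      rw [h1, hlab s hs]
      simp
    rw [List.map_congr_left hpt, List.sum_map_add]
    have hconst : (List.map (fun (_ : LTree) => ({a} : Multiset ℕ)) ts).sum
        = Multiset.replicate ts.length a := by
      rw [List.map_const', sum_const_singleton]
    rw [hconst, hlen, Multiset.replicate_succ, Multiset.cons_add]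
    simp only [Function.comp_def]

/-! ### Counting -/

lemma count_bind_g (k : ℕ → ℕ) (m : Multiset ℕ) (j : ℕ) :
    Multiset.count j (m.bind (fun i => Multiset.replicate (k i - 1 + 1) i))
      = Multiset.count j m * (k j - 1 + 1) := by
  induction m using Multiset.induction_on with
  | empty => simp
  | cons b m ih =>
    rw [Multiset.cons_bind, Multiset.count_add, ih, Multiset.count_cons,
      Multiset.count_replicate]
    by_cases hbj : b = j
    · subst hbj; simp; ring
    · simp [hbj, Ne.symm hbj]

lemma count_msetM (n : ℕ) (k : ℕ → ℕ) (j : ℕ) :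
    Multiset.count j (msetM n k) = if j ∈ Finset.Icc 1 n then k j else 0 := by
  rw [msetM, Multiset.count_sum']
  rw [Finset.sum_congr rfl fun i _ => Multiset.count_replicate j i (k i)]
  exact Finset.sum_ite_eq' _ _ _

lemma card_msetM (n : ℕ) (k : ℕ → ℕ) :
    Multiset.card (msetM n k) = ∑ i ∈ Finset.Icc 1 n, k i := by
  rw [msetM, card_finsetSum]
  simp

/-- For `M = {1^{k 1}, …, n^{k n}}` with every `k i ≥ 1` and `K = k 1 + ⋯ + k n`, every tree
`T ∈ 𝒯_M` satisfies `eleaf T + dcdes T + dcasc T + cpeak T + cval T = K + 1`. -/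
theorem tree_statistics_sum
    (n : ℕ) (k : ℕ → ℕ) (hk : ∀ i, 1 ≤ i → i ≤ n → 1 ≤ k i)
    (K : ℕ) (hK : K = ∑ i ∈ Finset.Icc 1 n, k i)
    (T : LTree) (hT : memTM n k T) :
    T.eleaf + T.dcdes + T.dcasc + T.cpeak + T.cval = K + 1 := by
  obtain ⟨hroot, hlab, hOK⟩ := hT
  have hrel := labels_eq k T true hOK
  simp only [Bool.cond_true] at hrel
  rw [hroot, hlab, Multiset.singleton_add] at hrel
  have hb : msetM n k = (oddMS T true).bind (fun i => Multiset.replicate (k i - 1 + 1) i) :=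
    (Multiset.cons_inj_right 0).mp hrel
  have hcnt : ∀ j, Multiset.count j (oddMS T true) * (k j - 1 + 1)
      = if j ∈ Finset.Icc 1 n then k j else 0 := by
    intro j
    rw [← count_bind_g, ← hb, count_msetM]
  have hm1 : ∀ j, Multiset.count j (oddMS T true) ≤ 1 := by
    intro j
    have h := hcnt j
    by_cases hj : j ∈ Finset.Icc 1 n
    · rw [if_pos hj] at h
      have hk1 : 1 ≤ k j := hk j (Finset.mem_Icc.mp hj).1 (Finset.mem_Icc.mp hj).2
      by_contra hcon
      have h2 : 2 ≤ Multiset.count j (oddMS T true) := by omega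
      have h3 := Nat.mul_le_mul_right (k j - 1 + 1) h2
      omega
    · rw [if_neg hj] at h
      rcases Nat.mul_eq_zero.mp h with h' | h' <;> omega
  have hnd : (oddMS T true).Nodup := Multiset.nodup_iff_count_le_one.mpr hm1
  have h0 : T.label ∉ oddMS T true := by
    rw [hroot]
    intro hmem
    have h := hcnt 0
    rw [if_neg (by simp)] at h
    have hp := Multiset.count_pos.mpr hmem
    rcases Nat.mul_eq_zero.mp h with h' | h' <;> omega
  have hkey := key k T true hOK hnd (fun _ => h0)
  have hcard : Multiset.card T.labels = K + 1 := by
    rw [hlab, Multiset.card_cons, card_msetM, hK]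
  simp only [Bool.cond_true] at hkey
  rw [hcard] at hkey
  simpa [LTree.eleaf, LTree.dcdes, LTree.dcasc, LTree.cpeak, LTree.cval] using hkey
end

section
/- Let M = {1^{k_1}, 2^{k_2}, ..., n^{k_n}} be a multiset with each k_i ≥ 1. For every tree T ∈ 𝒯_M, one has casc(T) = cpeak(T) + dcasc(T). -/
/-! Common definitions: words (permutations of multisets), their statistics,
ordered labeled trees and their cyclic statistics. -/

attribute [local instance] Classical.propDecidable

lemma zip_rotate (l l' : List ℕ) (h : l.length = l'.length) (n : ℕ) :
    (l.zip l').rotate n = (l.rotate n).zip (l'.rotate n) := by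
  apply List.ext_getElem
  · simp [h]
  · intro i h1 h2
    have hlen : (l.zip l').length = l.length := by simp [h]
    simp only [List.getElem_rotate, List.getElem_zip, List.length_zip, h, min_self]

lemma countP_zip3 (p : ℕ × ℕ → Bool) :
    ∀ (l1 l2 l3 : List ℕ), l2.length = l3.length →
    (l1.zip (l2.zip l3)).countP (fun q => p (q.1, q.2.1)) = (l1.zip l2).countP p
  | [], _, _, _ => by simp
  | a :: t1, [], l3, h => by simp [List.zip]
  | a :: t1, b :: t2, c :: t3, h => by
      simp only [List.zip_cons_cons, List.countP_cons]
      rw [countP_zip3 p t1 t2 t3 (by simpa using h)]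
  | a :: t1, b :: t2, [], h => by simp at h

lemma countP_disjoint (p q : ℕ × ℕ × ℕ → Bool) :
    ∀ (l : List (ℕ × ℕ × ℕ)), (∀ x ∈ l, ¬(p x ∧ q x)) →
    l.countP p + l.countP q = l.countP (fun x => p x || q x)
  | [], _ => by simp
  | a :: t, h => by
      simp only [List.countP_cons]
      have ht := countP_disjoint p q t (fun x hx => h x (List.mem_cons_of_mem a hx))
      have ha := h a (List.mem_cons_self (a := a) (l := t))
      by_cases hp : p a = true <;> by_cases hq : q a = true <;>
        simp [hp, hq] at ha ⊢ <;> omega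

lemma word_main (w : List ℕ)
    (H : ∀ p ∈ cycTriples w, ¬(p.1 < p.2.1 ∧ p.2.1 = p.2.2)) :
    cascW w = cpeakW w + dcascW w := by
  by_cases hw : w = []
  · subst hw; simp [cascW, cpeakW, dcascW, cycTriples]
  have hlen : 1 ≤ w.length := List.length_pos_iff.mpr hw
  rw [cpeakW, dcascW, countP_disjoint]
  · rw [show ((fun x : ℕ × ℕ × ℕ => decide (x.1 < x.2.1 ∧ x.2.2 < x.2.1) ||
        decide (x.1 < x.2.1 ∧ x.2.1 < x.2.2))) = (fun x => decide (x.1 < x.2.1 ∧ x.2.2 < x.2.1) ||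
        decide (x.1 < x.2.1 ∧ x.2.1 < x.2.2)) from rfl]
    have step1 : (cycTriples w).countP (fun x => decide (x.1 < x.2.1 ∧ x.2.2 < x.2.1) ||
        decide (x.1 < x.2.1 ∧ x.2.1 < x.2.2)) =
        (cycTriples w).countP (fun x => decide (x.1 < x.2.1)) := by
      apply List.countP_congr
      intro x hx
      have := H x hx
      simp only [Bool.or_eq_true, decide_eq_true_eq]
      constructor
      · rintro (⟨h1, _⟩ | ⟨h1, _⟩) <;> exact h1
      · intro h1
        rcases lt_trichotomy x.2.2 x.2.1 with h2 | h2 | h2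
        · exact Or.inl ⟨h1, h2⟩
        · exact absurd ⟨h1, h2.symm⟩ this
        · exact Or.inr ⟨h1, h2⟩
    rw [step1]
    rw [cycTriples, countP_zip3 (fun q => decide (q.1 < q.2)) _ _ _ (by simp)]
    have key : (w.rotate (w.length - 1)).zip w =
        (w.zip (w.rotate 1)).rotate (w.length - 1) := by
      rw [zip_rotate _ _ (by simp), List.rotate_rotate]
      congr 1
      rw [show 1 + (w.length - 1) = w.length by omega, List.rotate_length]
    rw [key, (List.rotate_perm _ _).countP_eq]
    rfl
  · intro x _
    rintro ⟨h1, h2⟩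
    simp only [decide_eq_true_eq] at h1 h2
    omega

lemma word_const (w : List ℕ) (c : ℕ) (h : ∀ x ∈ w, x = c) : cascW w = 0 := by
  rw [cascW, List.countP_eq_zero]
  rintro ⟨x, y⟩ hxy
  obtain ⟨hx, hy⟩ := List.of_mem_zip hxy
  rw [List.mem_rotate] at hy
  simp [h x hx, h y hy]

lemma word_nodup (w : List ℕ) (h : w.Nodup) :
    ∀ p ∈ cycTriples w, ¬(p.1 < p.2.1 ∧ p.2.1 = p.2.2) := by
  intro p hp ⟨h1, h2⟩
  rw [List.mem_iff_getElem] at hp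
  obtain ⟨i, hi, hget⟩ := hp
  have hlen : (cycTriples w).length = w.length := by simp [cycTriples]
  have hiw : i < w.length := hlen ▸ hi
  have : (cycTriples w)[i] = (w[(i + (w.length - 1)) % w.length]'(Nat.mod_lt _ (by omega)),
      w[i], w[(i + 1) % w.length]'(Nat.mod_lt _ (by omega))) := by
    simp only [cycTriples, List.getElem_zip, List.getElem_rotate]
  rw [this] at hget
  rw [← hget] at h1 h2
  simp only at h1 h2
  have := (h.getElem_inj_iff).mp h2.symm
  -- h2 : w[i] = w[(i+1)%w.length]; this : (i+1)%w.length = i ... careful direction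
  have heq : i = (i + 1) % w.length := (h.getElem_inj_iff).mp h2
  rcases Nat.lt_or_ge (i + 1) w.length with hc | hc
  · rw [Nat.mod_eq_of_lt hc] at heq
    exact absurd heq (by omega)
  · have hm : (i + 1) % w.length = 0 := by
      rw [show i + 1 = w.length by omega, Nat.mod_self]
    rw [hm] at heq
    have hi0 : i = 0 := heq
    have hlen1 : w.length = 1 := by omega
    have e1 : w[(i + (w.length - 1)) % w.length]'(Nat.mod_lt _ (by omega)) = w[i]'hiw := by
      congr 1
      rw [hi0, hlen1]
    rw [e1] at h1
    exact absurd h1 (lt_irrefl _)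

lemma sum_map_add {α : Type*} (l : List α) (f g : α → ℕ) :
    (l.map fun x => f x + g x).sum = (l.map f).sum + (l.map g).sum := by
  induction l with
  | nil => simp
  | cons a t ih => simp [ih]; omega

lemma count_list_sum (i : ℕ) : ∀ (L : List (Multiset ℕ)),
    L.sum.count i = (L.map (Multiset.count i)).sum
  | [] => by simp
  | m :: L => by
      simp only [List.sum_cons, Multiset.count_add, List.map_cons, count_list_sum i L]

lemma labels_node (a : ℕ) (ts : List LTree) :
    LTree.labels (LTree.node a ts) = a ::ₘ (ts.map LTree.labels).sum := by
  rw [LTree.labels]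
  congr 1
  exact congrArg List.sum (List.attach_map_val (l := ts) (f := LTree.labels))

lemma count_labels_node (i a : ℕ) (ts : List LTree) :
    (LTree.labels (LTree.node a ts)).count i =
      (if i = a then 1 else 0) + (ts.map (fun s => (LTree.labels s).count i)).sum := by
  rw [labels_node, Multiset.count_cons, count_list_sum, List.map_map]
  rw [show (Multiset.count i ∘ LTree.labels) = fun s => (LTree.labels s).count i from rfl]
  omega

lemma count_label_pos (s : LTree) : 1 ≤ (s.labels).count s.label := by
  obtain ⟨c, cs⟩ := s
  rw [show (LTree.node c cs).label = c from rfl, count_labels_node]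
  simp

lemma odd_count_low (k : ℕ → ℕ) (s : LTree) (hs : s.oddOK k false) :
    max 1 (k s.label) ≤ (s.labels).count s.label := by
  obtain ⟨c, cs⟩ := s
  rw [LTree.oddOK] at hs
  obtain ⟨hlen, hall⟩ := hs.1 rfl
  rw [show (LTree.node c cs).label = c from rfl, count_labels_node,
    if_pos rfl]
  have hterm : ∀ x ∈ cs, 1 ≤ (LTree.labels x).count c := by
    intro x hx
    have := count_label_pos x
    rwa [hall x hx] at this
  have hsum : cs.length ≤ (cs.map (fun s => (LTree.labels s).count c)).sum := by
    calc cs.length = (cs.map (fun _ => 1)).sum := by simp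
    _ ≤ _ := List.sum_le_sum (fun x hx => hterm x hx)
  omega

theorem main (k bound : ℕ → ℕ)
    (H1 : ∀ i, bound i < max 2 (k i + k i)) (H2 : ∀ i, bound i < max 2 (1 + k i)) :
    ∀ (T : LTree) (b : Bool), T.oddOK k b →
      (∀ i, T.labels.count i ≤ bound i) →
      T.casc = LTree.evenSum cpeakW T b + LTree.evenSum dcascW T b
  | LTree.node a ts, b, hok, hcount => by
    rw [LTree.oddOK] at hok
    have hchildcount : ∀ s ∈ ts, ∀ i, (LTree.labels s).count i ≤ bound i := by
      intro s hs i
      refine le_trans ?_ (hcount i)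
      rw [count_labels_node]
      have hm : (LTree.labels s).count i ∈ ts.map (fun s => (LTree.labels s).count i) :=
        List.mem_map_of_mem hs
      have := List.single_le_sum (l := ts.map (fun s => (LTree.labels s).count i))
        (fun x _ => Nat.zero_le x) _ hm
      omega
    have IH : ∀ s : {x // x ∈ ts}, LTree.casc s.1 =
        LTree.evenSum cpeakW s.1 (!b) + LTree.evenSum dcascW s.1 (!b) := fun s =>
      main k bound H1 H2 s.1 (!b) (hok.2 s) (hchildcount s.1 s.2)
    rw [LTree.casc, LTree.evenSum, LTree.evenSum]
    have hsplit : (ts.attach.map (fun s => LTree.casc s.1)).sum =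
        (ts.attach.map (fun s => LTree.evenSum cpeakW s.1 (!b))).sum +
        (ts.attach.map (fun s => LTree.evenSum dcascW s.1 (!b))).sum := by
      rw [← sum_map_add]
      exact congrArg List.sum (List.map_congr_left (fun s _ => IH s))
    rw [hsplit]
    have hroot : cascW (a :: ts.map LTree.label) =
        cond b (cpeakW (a :: ts.map LTree.label)) 0
        + cond b (dcascW (a :: ts.map LTree.label)) 0 := by
      cases b with
      | false =>
        simp only [cond_false, Nat.add_zero]
        apply word_const _ a
        intro x hx
        rcases List.mem_cons.mp hx with rfl | hx
        · rfl
        · obtain ⟨s, hs, rfl⟩ := List.mem_map.mp hx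
          exact (hok.1 rfl).2 s hs
      | true =>
        simp only [cond_true]
        apply word_main
        apply word_nodup
        rw [List.nodup_cons]
        constructor
        · intro hmem
          obtain ⟨s, hs, hlab⟩ := List.mem_map.mp hmem
          have hodd : s.oddOK k false := by
            have := hok.2 ⟨s, hs⟩
            simpa using this
          have hlow := odd_count_low k s hodd
          rw [hlab] at hlow
          have hone : (LTree.labels s).count a ∈ ts.map (fun s => (LTree.labels s).count a) :=
            List.mem_map_of_mem hs
          have hsum := List.single_le_sum
            (l := ts.map (fun s => (LTree.labels s).count a)) (fun x _ => Nat.zero_le x) _ hone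
          have htot := hcount a
          rw [count_labels_node, if_pos rfl] at htot
          have := H2 a
          omega
        · by_contra hnd
          obtain ⟨x, hdup⟩ := List.exists_duplicate_iff_not_nodup.mpr hnd
          have hsub : [x, x].Sublist (ts.map LTree.label) := List.duplicate_iff_sublist.mp hdup
          obtain ⟨l', hl', hml⟩ := List.sublist_map_iff.mp hsub
          rcases l' with _ | ⟨s1, _ | ⟨s2, _ | ⟨s3, l4⟩⟩⟩
          · simp at hml
          · simp at hml
          · simp only [List.map_cons, List.map_nil, List.cons.injEq, and_true] at hml
            obtain ⟨hx1, hx2⟩ := hml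
            have hs1l : s1.label = x := hx1.symm
            have hs2l : s2.label = x := hx2.symm
            have hs1 : s1 ∈ ts := hl'.subset (by simp)
            have hs2 : s2 ∈ ts := hl'.subset (by simp)
            have hodd1 : s1.oddOK k false := by simpa using hok.2 ⟨s1, hs1⟩
            have hodd2 : s2.oddOK k false := by simpa using hok.2 ⟨s2, hs2⟩
            have hlow1 := odd_count_low k s1 hodd1
            have hlow2 := odd_count_low k s2 hodd2
            rw [hs1l] at hlow1
            rw [hs2l] at hlow2
            have hsub2 : ([s1, s2].map (fun s => (LTree.labels s).count x)).Sublist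
                (ts.map (fun s => (LTree.labels s).count x)) := hl'.map _
            have hsum := hsub2.sum_le_sum (fun y _ => Nat.zero_le y)
            simp only [List.map_cons, List.map_nil, List.sum_cons, List.sum_nil] at hsum
            have htot := hcount x
            rw [count_labels_node] at htot
            have := H1 x
            omega
          · have := congrArg List.length hml
            simp at this
    omega
termination_by T => sizeOf T
decreasing_by exact LTree.sizeOf_lt_of_mem s.2

/-- For `M = {1^{k 1}, …, n^{k n}}` with every `k i ≥ 1`, every tree `T ∈ 𝒯_M` satisfies
`casc T = cpeak T + dcasc T`. -/
theorem tree_casc_eq_cpeak_add_dcasc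
    (n : ℕ) (k : ℕ → ℕ) (hk : ∀ i, 1 ≤ i → i ≤ n → 1 ≤ k i)
    (T : LTree) (hT : memTM n k T) :
    T.casc = T.cpeak + T.dcasc := by
  obtain ⟨-, hlab, hok⟩ := hT
  have hmset : ∀ i, (msetM n k).count i = if 1 ≤ i ∧ i ≤ n then k i else 0 := by
    intro i
    rw [msetM, Multiset.count_sum']
    simp only [Multiset.count_replicate]
    rw [Finset.sum_ite_eq' (Finset.Icc 1 n) i k]
    simp [Finset.mem_Icc]
  have hcount : ∀ i, T.labels.count i ≤ (fun i => ((0 ::ₘ msetM n k).count i)) i := by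
    rw [hlab]; exact fun i => le_refl _
  have H1 : ∀ i, (fun i => ((0 ::ₘ msetM n k).count i)) i < max 2 (k i + k i) := by
    intro i
    simp only
    rw [Multiset.count_cons, hmset i]
    split_ifs with h1 h2
    · exact absurd (h2 ▸ h1.1) (by omega)
    · have := hk i h1.1 h1.2
      omega
    · omega
    · omega
  have H2 : ∀ i, (fun i => ((0 ::ₘ msetM n k).count i)) i < max 2 (1 + k i) := by
    intro i
    simp only
    rw [Multiset.count_cons, hmset i]
    split_ifs with h1 h2
    · exact absurd (h2 ▸ h1.1) (by omega)
    · have := hk i h1.1 h1.2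
      omega
    · omega
    · omega
  have := main k (fun i => ((0 ::ₘ msetM n k).count i)) H1 H2 T true hok hcount
  rw [LTree.cpeak, LTree.dcasc]
  exact this
end
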